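/- arXiv:2406.09449 — 2 statements merged into one kernel-verified Lean document; each statement's English description precedes it below -/
import Mathlib

section
/- Let n ≥ 1 and let φ : S^n → ℝ be a smooth positive function satisfying the equation Δφ − (n/2)|Dφ|²/φ + (n/2)(φ − 1/φ) = φ⁻¹ f on the sphere S^n, where f : S^n → ℝ is smooth and positive. Then at a point x₁ where φ attains its maximum, φ(x₁)² ≥ (2/n) min f + 1, and at a point x₀ where φ attains its minimum, φ(x₀)² ≤ (2/n) max f + 1. In particular max φ > 1. -/
/-!
At a critical point the gradient term drops out and, after multiplying by `φ`, the equation reads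
`φ Δφ + (n/2)(φ² − 1) = f`. The sign of `Δφ` at a maximum (resp. minimum) of `φ` then bounds
`(n/2)(φ² − 1)` below by `min f` (resp. above by `max f`); since `min f > 0`, `max φ > 1`.
-/

section Christoffel

variable {c n p L G F m : ℝ}

theorem mul_add_eq_of_christoffel (hp : 0 < p) (hG : G = 0)
    (h : L - c * G / p + c * (p - 1 / p) = p⁻¹ * F) : p * L + c * (p ^ 2 - 1) = F := by
  subst hG
  field_simp at h
  linear_combination h

theorem le_sq_of_christoffel_of_nonpos (hn : 0 < n) (hp : 0 < p) (hL : L ≤ 0)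
    (h : p * L + n / 2 * (p ^ 2 - 1) = F) (hm : m ≤ F) : 2 / n * m + 1 ≤ p ^ 2 := by
  have hpL : p * L ≤ 0 := mul_nonpos_of_nonneg_of_nonpos hp.le hL
  rw [div_mul_eq_mul_div, div_add_one hn.ne', div_le_iff₀ hn]
  nlinarith

theorem sq_le_of_christoffel_of_nonneg (hn : 0 < n) (hp : 0 < p) (hL : 0 ≤ L)
    (h : p * L + n / 2 * (p ^ 2 - 1) = F) (hm : F ≤ m) : p ^ 2 ≤ 2 / n * m + 1 := by
  have hpL : 0 ≤ p * L := mul_nonneg hp.le hL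
  rw [div_mul_eq_mul_div, div_add_one hn.ne', le_div_iff₀ hn]
  nlinarith

end Christoffel

theorem stmt_0_general {n : ℕ} (hn : 1 ≤ n)
    (φ f lapφ gradφsq : (Metric.sphere (0 : EuclideanSpace ℝ (Fin (n+1))) 1) → ℝ)
    (hφpos : ∀ x, 0 < φ x) (hfpos : ∀ x, 0 < f x)
    (heq : ∀ x, lapφ x - (n / 2) * gradφsq x / φ x + (n / 2) * (φ x - 1 / φ x)
      = (φ x)⁻¹ * f x)
    (fmin fmax : ℝ)
    (hfmin : IsLeast (Set.range f) fmin) (hfmax : IsGreatest (Set.range f) fmax)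
    (x₁ x₀ : Metric.sphere (0 : EuclideanSpace ℝ (Fin (n+1))) 1)
    (hlap₁ : lapφ x₁ ≤ 0) (hgrad₁ : gradφsq x₁ = 0)
    (hlap₀ : 0 ≤ lapφ x₀) (hgrad₀ : gradφsq x₀ = 0) :
    (2 / n : ℝ) * fmin + 1 ≤ (φ x₁) ^ 2 ∧ (φ x₀) ^ 2 ≤ (2 / n : ℝ) * fmax + 1 ∧
      1 < φ x₁ := by
  have hn' : (0 : ℝ) < n := by exact_mod_cast hn
  have lower : (2 / n : ℝ) * fmin + 1 ≤ (φ x₁) ^ 2 :=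
    le_sq_of_christoffel_of_nonpos hn' (hφpos x₁) hlap₁
      (mul_add_eq_of_christoffel (hφpos x₁) hgrad₁ (heq x₁)) (hfmin.2 ⟨x₁, rfl⟩)
  have upper : (φ x₀) ^ 2 ≤ (2 / n : ℝ) * fmax + 1 :=
    sq_le_of_christoffel_of_nonneg hn' (hφpos x₀) hlap₀
      (mul_add_eq_of_christoffel (hφpos x₀) hgrad₀ (heq x₀)) (hfmax.2 ⟨x₀, rfl⟩)
  refine ⟨lower, upper, (one_lt_sq_iff₀ (hφpos x₁).le).1 ?_⟩
  obtain ⟨x, rfl⟩ := hfmin.1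
  have : 0 < (2 / n : ℝ) * f x := mul_pos (div_pos two_pos hn') (hfpos x)
  linarith

/-- a priori `C⁰` bounds at extremum points for solutions of the
Christoffel equation `Δφ − (n/2)|Dφ|²/φ + (n/2)(φ − 1/φ) = φ⁻¹ f` on `S^n`.
The Laplacian `lapφ` and squared gradient norm `gradφsq` of `φ` are given as data,
together with the second-derivative test facts at extremum points. -/
theorem stmt_0 {n : ℕ} (hn : 1 ≤ n)
    (φ f lapφ gradφsq : (Metric.sphere (0 : EuclideanSpace ℝ (Fin (n+1))) 1) → ℝ)
    (hφpos : ∀ x, 0 < φ x) (hfpos : ∀ x, 0 < f x)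
    (heq : ∀ x, lapφ x - (n / 2) * gradφsq x / φ x + (n / 2) * (φ x - 1 / φ x)
      = (φ x)⁻¹ * f x)
    (fmin fmax : ℝ)
    (hfmin : IsLeast (Set.range f) fmin) (hfmax : IsGreatest (Set.range f) fmax)
    (x₁ x₀ : Metric.sphere (0 : EuclideanSpace ℝ (Fin (n+1))) 1)
    (hmax : ∀ x, φ x ≤ φ x₁) (hmin : ∀ x, φ x₀ ≤ φ x)
    (hlap₁ : lapφ x₁ ≤ 0) (hgrad₁ : gradφsq x₁ = 0)
    (hlap₀ : 0 ≤ lapφ x₀) (hgrad₀ : gradφsq x₀ = 0) :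
    (2 / n : ℝ) * fmin + 1 ≤ (φ x₁) ^ 2 ∧ (φ x₀) ^ 2 ≤ (2 / n : ℝ) * fmax + 1 ∧
      1 < φ x₁ :=
  stmt_0_general hn φ f lapφ gradφsq hφpos hfpos heq fmin fmax hfmin hfmax x₁ x₀ hlap₁ hgrad₁ hlap₀
    hgrad₀
end

section
/- Let φ be a smooth positive function on S^n and fix x ∈ S^n with a local orthonormal frame in which the tensor U[φ] = D²φ − (1/2)(|Dφ|²/φ) g + (1/2)(φ − 1/φ) g is diagonal at x. Then for α ≠ i, the covariant derivatives satisfy U_{αα i} = U_{iαα} − (φ_i/φ) U_{ii} at x. -/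
/-!
The gradient term `∑ₗ φₗ φₗᵢ` of `U_{ααi}` reduces to `φᵢ φᵢᵢ` because the Hessian is diagonal,
and then every term of `U_{ααi} − U_{iαα} + (φᵢ/φ) Uᵢᵢ` cancels except `φ_{ααi} − φ_{iαα} + φᵢ`,
which vanishes by the Ricci identity of the unit sphere.
-/

lemma Matrix.IsDiag.sum_mul_apply {n R : Type*} [Fintype n] [NonUnitalNonAssocSemiring R]
    {A : Matrix n n R} (hA : A.IsDiag) (v : n → R) (k : n) : ∑ l, v l * A l k = v k * A k k :=
  Fintype.sum_eq_single k fun _ hl => by rw [hA hl, mul_zero]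

lemma third_deriv_comm_of_ne {n : Type*} [DecidableEq n] {d : n → ℝ} {d3 : n → n → n → ℝ}
    (hsym3 : ∀ i j k, d3 i j k = d3 j i k)
    (hRicci : ∀ k j i, d3 k j i - d3 k i j
      = (if i = k then d j else 0) - (if j = k then d i else 0))
    {α i : n} (h : α ≠ i) : d3 α α i = d3 i α α - d i := by
  have hR := hRicci α α i
  rw [hsym3 α i α, if_neg h.symm, if_pos rfl] at hR
  linarith

/-- `d, d2, d3` are the components of the first, second and third covariant derivatives of `φ`
in an orthonormal frame at `x`, and `φ0 = φ x`. -/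
theorem stmt_11 {n : ℕ} (φ0 : ℝ) (hφ : 0 < φ0)
    (d : Fin n → ℝ) (d2 : Fin n → Fin n → ℝ) (d3 : Fin n → Fin n → Fin n → ℝ)
    (hsym3 : ∀ i j k, d3 i j k = d3 j i k)
    (hRicci : ∀ k j i, d3 k j i - d3 k i j
      = (if i = k then d j else 0) - (if j = k then d i else 0))
    (hdiag : ∀ i j, i ≠ j → d2 i j = 0)
    (U2 : Fin n → Fin n → ℝ)
    (hU2 : ∀ i j, U2 i j = d2 i j +
      (if i = j then -(1/2) * (∑ l, (d l) ^ 2) / φ0 + (1/2) * (φ0 - 1 / φ0) else 0))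
    (U3 : Fin n → Fin n → Fin n → ℝ)
    (hU3 : ∀ a b k, U3 a b k = d3 a b k +
      (if a = b then
        -(∑ l, d l * d2 l k) / φ0 + (1/2) * (∑ l, (d l) ^ 2) * d k / φ0 ^ 2
          + (1/2) * (d k + d k / φ0 ^ 2)
       else 0)) :
    ∀ α i, α ≠ i → U3 α α i = U3 i α α - (d i / φ0) * U2 i i := by
  intro α i hαi
  have hd2 : Matrix.IsDiag (d2 : Matrix (Fin n) (Fin n) ℝ) := hdiag
  rw [hU3, hU3, hU2, if_pos rfl, if_neg hαi.symm, if_pos rfl, hd2.sum_mul_apply d i,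
    third_deriv_comm_of_ne hsym3 hRicci hαi]
  field_simp
  ring
end
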